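/- arXiv:1503.02215 — 5 statements merged into one kernel-verified Lean document; each statement's English description precedes it below -/
import Mathlib

section
/- Let r ≥ 1 and let X be an invertible r × r matrix with integer entries (X ∈ GL_r(ℤ)) whose complex eigenvalues λ_1, …, λ_r are pairwise distinct. Then for every n ≥ 1 the complex number D_n = n² · (det X)^{n−1} · ∏_{1 ≤ i < j ≤ r} ((λ_i^n − λ_j^n)/(λ_i − λ_j))² is an integer, i.e., there exists d_n ∈ ℤ with (d_n : ℂ) = D_n. -/
open Polynomial Finset

/-- The symmetric integer polynomial `∏_{i ≠ j} (∑_{k<n} X_j^k X_i^{n-1-k})`. -/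
private noncomputable def stmt0P (r n : ℕ) : MvPolynomial (Fin r) ℤ :=
  ∏ i : Fin r, ∏ j ∈ ({i}ᶜ : Finset (Fin r)),
    ∑ k ∈ Finset.range n, MvPolynomial.X j ^ k * MvPolynomial.X i ^ (n - 1 - k)

private lemma stmt0P_symm (r n : ℕ) : (stmt0P r n).IsSymmetric := by
  intro e
  unfold stmt0P
  simp only [map_prod, map_sum, map_mul, map_pow, MvPolynomial.rename_X]
  have himg : ∀ i : Fin r, ({i}ᶜ : Finset (Fin r)).image e = {e i}ᶜ := by
    intro i
    ext j
    simp only [Finset.mem_image, Finset.mem_compl, Finset.mem_singleton]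
    constructor
    · rintro ⟨a, ha, rfl⟩
      exact fun hc => ha (e.injective hc)
    · intro hj
      exact ⟨e.symm j, fun hc => hj (by rw [← hc]; simp), by simp⟩
  calc ∏ i : Fin r, ∏ j ∈ ({i}ᶜ : Finset (Fin r)),
        ∑ k ∈ Finset.range n, MvPolynomial.X (e j) ^ k * MvPolynomial.X (e i) ^ (n - 1 - k)
      = ∏ i : Fin r, ∏ j ∈ ({e i}ᶜ : Finset (Fin r)),
        ∑ k ∈ Finset.range n, MvPolynomial.X j ^ k * MvPolynomial.X (e i) ^ (n - 1 - k) := by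
        refine Finset.prod_congr rfl fun i _ => ?_
        rw [← himg i, Finset.prod_image fun a _ b _ hab => e.injective hab]
    _ = ∏ i : Fin r, ∏ j ∈ ({i}ᶜ : Finset (Fin r)),
        ∑ k ∈ Finset.range n, MvPolynomial.X j ^ k * MvPolynomial.X i ^ (n - 1 - k) :=
        Equiv.prod_comp e fun i => ∏ j ∈ ({i}ᶜ : Finset (Fin r)),
          ∑ k ∈ Finset.range n, MvPolynomial.X j ^ k * MvPolynomial.X i ^ (n - 1 - k)

/-- For `X ∈ GL_r(ℤ)` with pairwise distinct complex eigenvalues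
`λ_1, …, λ_r`, for every `n ≥ 1` the number
`n² (det X)^{n-1} ∏_{i<j} ((λ_i^n − λ_j^n)/(λ_i − λ_j))²` is an integer. -/
theorem stmt_0 (r : ℕ) (hr : 1 ≤ r) (X : Matrix (Fin r) (Fin r) ℤ)
    (hX : IsUnit X.det) (lam : Fin r → ℂ)
    (hchar : X.charpoly.map (Int.castRingHom ℂ) =
      ∏ i : Fin r, (Polynomial.X - Polynomial.C (lam i)))
    (hdist : Function.Injective lam) (n : ℕ) (hn : 1 ≤ n) :
    ∃ d : ℤ, (d : ℂ) =
      (n : ℂ) ^ 2 * (X.det : ℂ) ^ (n - 1) *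
        ∏ i : Fin r, ∏ j ∈ Finset.Ioi i,
          ((lam i ^ n - lam j ^ n) / (lam i - lam j)) ^ 2 := by
  classical
  -- the multiset of eigenvalues
  have hcard : Multiset.card (Finset.univ.val.map lam) = r := by
    simp
  -- Vieta: elementary symmetric functions of the eigenvalues are integers
  have key : ∀ m : ℕ, m ≤ r →
      (Finset.univ.val.map lam).esymm m
        = ((-1 : ℂ)) ^ m * (X.charpoly.coeff (r - m) : ℂ) := by
    intro m hm
    have h1 : ((Finset.univ.val.map lam).map fun t => Polynomial.X - Polynomial.C t).prod
        = ∏ i : Fin r, (Polynomial.X - Polynomial.C (lam i)) := by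
      rw [Multiset.map_map]
      rfl
    have h2 := Multiset.prod_X_sub_C_coeff (Finset.univ.val.map lam)
      (k := r - m) (by rw [hcard]; omega)
    rw [h1, ← hchar, Polynomial.coeff_map, hcard, Nat.sub_sub_self hm] at h2
    have hsq : ((-1 : ℂ)) ^ m * (-1) ^ m = 1 := by
      rw [← mul_pow]; norm_num
    calc (Finset.univ.val.map lam).esymm m
        = ((-1 : ℂ) ^ m * (-1) ^ m) * (Finset.univ.val.map lam).esymm m := by
          rw [hsq, one_mul]
      _ = (-1 : ℂ) ^ m * ((-1 : ℂ) ^ m * (Finset.univ.val.map lam).esymm m) := by ring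
      _ = (-1 : ℂ) ^ m * (Int.castRingHom ℂ) (X.charpoly.coeff (r - m)) := by rw [← h2]
      _ = (-1 : ℂ) ^ m * (X.charpoly.coeff (r - m) : ℂ) := rfl
  -- the integer values of the elementary symmetric polynomials at `lam`
  set c : Fin r → ℤ := fun i => (-1) ^ ((i : ℕ) + 1) * X.charpoly.coeff (r - ((i : ℕ) + 1))
    with hc
  have hE : ∀ i : Fin r,
      MvPolynomial.aeval lam (MvPolynomial.esymm (Fin r) ℤ ((i : ℕ) + 1)) = ((c i : ℤ) : ℂ) := by
    intro i
    rw [MvPolynomial.aeval_esymm_eq_multiset_esymm, key _ (by omega : (i : ℕ) + 1 ≤ r), hc]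
    push_cast
    ring
  -- apply the fundamental theorem of symmetric polynomials
  obtain ⟨q, hq⟩ := MvPolynomial.esymmAlgHom_surjective (σ := Fin r) (R := ℤ) (n := r)
    (by simp) ⟨stmt0P r n, stmt0P_symm r n⟩
  have hqv : MvPolynomial.aeval
      (fun i : Fin r => MvPolynomial.esymm (Fin r) ℤ ((i : ℕ) + 1)) q = stmt0P r n := by
    have := congrArg Subtype.val hq
    rwa [MvPolynomial.esymmAlgHom_apply] at this
  -- hence the value of `stmt0P` at `lam` is an integer
  have hPval : MvPolynomial.aeval lam (stmt0P r n) = ((MvPolynomial.aeval c q : ℤ) : ℂ) := by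
    rw [← hqv, ← AlgHom.comp_apply, MvPolynomial.comp_aeval]
    have h4 : (fun i : Fin r =>
        (MvPolynomial.aeval lam) (MvPolynomial.esymm (Fin r) ℤ ((i : ℕ) + 1)))
        = fun i : Fin r => (Algebra.ofId ℤ ℂ) (c i) := by
      funext i
      rw [hE i]
      simp [Algebra.ofId_apply]
    rw [h4, ← MvPolynomial.comp_aeval, AlgHom.comp_apply]
    simp [Algebra.ofId_apply]
  -- compute the value of `stmt0P` at `lam`
  have haP : MvPolynomial.aeval lam (stmt0P r n)
      = ∏ i : Fin r, ∏ j ∈ Finset.Ioi i,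
          ((lam i ^ n - lam j ^ n) / (lam i - lam j)) ^ 2 := by
    have h0 : MvPolynomial.aeval lam (stmt0P r n)
        = ∏ i : Fin r, ∏ j ∈ ({i}ᶜ : Finset (Fin r)),
            ∑ k ∈ Finset.range n, lam j ^ k * lam i ^ (n - 1 - k) := by
      unfold stmt0P
      simp only [map_prod, map_sum, map_mul, map_pow, MvPolynomial.aeval_X]
    have h1 := Finset.prod_prod_Ioi_mul_eq_prod_prod_off_diag
      (fun a b => ∑ k ∈ Finset.range n, lam a ^ k * lam b ^ (n - 1 - k))
    rw [h0]
    refine Eq.trans (Eq.trans ?_ h1.symm) ?_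
    · exact Finset.prod_congr rfl fun i _ => Finset.prod_congr (by ext j; simp) fun _ _ => rfl
    refine Finset.prod_congr rfl fun i _ => Finset.prod_congr rfl fun j hj => ?_
    have hij : i < j := Finset.mem_Ioi.mp hj
    have hne : lam i - lam j ≠ 0 := sub_ne_zero.mpr fun hc' => hij.ne (hdist hc')
    have e1 : (∑ k ∈ Finset.range n, lam i ^ k * lam j ^ (n - 1 - k))
        = (lam i ^ n - lam j ^ n) / (lam i - lam j) := by
      rw [eq_div_iff hne]
      exact geom_sum₂_mul (lam i) (lam j) n
    have e2 : (∑ k ∈ Finset.range n, lam j ^ k * lam i ^ (n - 1 - k))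
        = (lam i ^ n - lam j ^ n) / (lam i - lam j) := by
      rw [eq_div_iff hne]
      linear_combination -(geom_sum₂_mul (lam j) (lam i) n)
    rw [e1, e2, sq]
  refine ⟨(n : ℤ) ^ 2 * X.det ^ (n - 1) * MvPolynomial.aeval c q, ?_⟩
  push_cast
  rw [← hPval, haP]
end

section
/- Let r ≥ 1 and let X ∈ GL_r(ℤ) have pairwise distinct complex eigenvalues λ_1, …, λ_r. For each n ≥ 1 let d_n ∈ ℤ be the integer satisfying (d_n : ℂ) = n² · (det X)^{n−1} · ∏_{1 ≤ i < j ≤ r} ((λ_i^n − λ_j^n)/(λ_i − λ_j))². Then {d_n} is a divisibility sequence: for all n, m ≥ 1, if n divides m then d_n divides d_m in ℤ. -/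
open Polynomial Finset

/-- For `X ∈ GL_r(ℤ)` with pairwise distinct complex eigenvalues,
the integers `d_n` with `(d_n : ℂ) = n² (det X)^{n-1} ∏_{i<j} ((λ_i^n − λ_j^n)/(λ_i − λ_j))²`
form a divisibility sequence. -/
theorem stmt_1 (r : ℕ) (hr : 1 ≤ r) (X : Matrix (Fin r) (Fin r) ℤ)
    (hX : IsUnit X.det) (lam : Fin r → ℂ)
    (hchar : X.charpoly.map (Int.castRingHom ℂ) =
      ∏ i : Fin r, (Polynomial.X - Polynomial.C (lam i)))
    (hdist : Function.Injective lam) (d : ℕ → ℤ)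
    (hd : ∀ n, 1 ≤ n → (d n : ℂ) =
      (n : ℂ) ^ 2 * (X.det : ℂ) ^ (n - 1) *
        ∏ i : Fin r, ∏ j ∈ Finset.Ioi i,
          ((lam i ^ n - lam j ^ n) / (lam i - lam j)) ^ 2) :
    ∀ n m : ℕ, 1 ≤ n → 1 ≤ m → n ∣ m → d n ∣ d m := by
  intro n m hn hm hnm
  obtain ⟨k, rfl⟩ := hnm
  have hk : 1 ≤ k := Nat.pos_of_ne_zero (by rintro rfl; simp at hm)
  by_cases h0 : ∃ i j : Fin r, i < j ∧ lam i ^ n = lam j ^ n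
  · obtain ⟨i, j, hij, he⟩ := h0
    have hzero : (d (n * k) : ℂ) = 0 := by
      rw [hd _ hm]
      have h1 : ((lam i ^ (n * k) - lam j ^ (n * k)) / (lam i - lam j)) ^ 2 = 0 := by
        rw [pow_mul, pow_mul, he, sub_self, zero_div]
        simp
      have h2 : (∏ i : Fin r, ∏ j ∈ Finset.Ioi i,
          ((lam i ^ (n * k) - lam j ^ (n * k)) / (lam i - lam j)) ^ 2) = 0 :=
        Finset.prod_eq_zero (Finset.mem_univ i)
          (Finset.prod_eq_zero (Finset.mem_Ioi.mpr hij) h1)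
      rw [h2, mul_zero]
    have hz : d (n * k) = 0 := by exact_mod_cast hzero
    simp [hz]
  · push_neg at h0
    set S : Fin r → Fin r → ℂ := fun i j =>
      ∑ s ∈ Finset.range k, (lam i ^ n) ^ s * (lam j ^ n) ^ (k - 1 - s) with hS
    set w : ℂ := (k : ℂ) ^ 2 * (X.det : ℂ) ^ (n * k - n) *
      ∏ i : Fin r, ∏ j ∈ Finset.Ioi i, (S i j) ^ 2 with hw
    have key : (d (n * k) : ℂ) = (d n : ℂ) * w := by
      rw [hd _ hm, hd _ hn, hw]
      have e1 : ((n * k : ℕ) : ℂ) ^ 2 = (n : ℂ) ^ 2 * (k : ℂ) ^ 2 := by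
        push_cast; ring
      have hnk : n ≤ n * k := Nat.le_mul_of_pos_right n hk
      have e2 : (X.det : ℂ) ^ (n * k - 1)
          = (X.det : ℂ) ^ (n - 1) * (X.det : ℂ) ^ (n * k - n) := by
        rw [← pow_add]
        congr 1
        omega
      have e3 : ∀ i j : Fin r,
          ((lam i ^ (n * k) - lam j ^ (n * k)) / (lam i - lam j)) ^ 2
            = ((lam i ^ n - lam j ^ n) / (lam i - lam j)) ^ 2 * (S i j) ^ 2 := by
        intro i j
        have hfac : lam i ^ (n * k) - lam j ^ (n * k)
            = S i j * (lam i ^ n - lam j ^ n) := by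
          rw [pow_mul, pow_mul, hS]
          exact (geom_sum₂_mul _ _ _).symm
        rw [hfac, mul_div_assoc, mul_pow]; ring
      have e4 : (∏ i : Fin r, ∏ j ∈ Finset.Ioi i,
            ((lam i ^ (n * k) - lam j ^ (n * k)) / (lam i - lam j)) ^ 2)
          = (∏ i : Fin r, ∏ j ∈ Finset.Ioi i,
              ((lam i ^ n - lam j ^ n) / (lam i - lam j)) ^ 2)
            * ∏ i : Fin r, ∏ j ∈ Finset.Ioi i, (S i j) ^ 2 := by
        rw [← Finset.prod_mul_distrib]
        refine Finset.prod_congr rfl fun i _ => ?_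
        rw [← Finset.prod_mul_distrib]
        exact Finset.prod_congr rfl fun j _ => e3 i j
      rw [e1, e2, e4]
      ring
    have hlam : ∀ i : Fin r, lam i ∈ integralClosure ℤ ℂ := by
      intro i
      refine ⟨X.charpoly, X.charpoly_monic, ?_⟩
      have h1 : eval (lam i) (X.charpoly.map (Int.castRingHom ℂ)) = 0 := by
        rw [hchar, eval_prod]
        exact Finset.prod_eq_zero (Finset.mem_univ i) (by simp)
      rwa [eval_map, ← algebraMap_int_eq] at h1
    have hwint : w ∈ integralClosure ℤ ℂ := by
      rw [hw]
      refine mul_mem (mul_mem ?_ ?_) ?_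
      · exact pow_mem (Subalgebra.natCast_mem _ k) 2
      · exact pow_mem (Subalgebra.intCast_mem _ X.det) _
      · refine prod_mem fun i _ => prod_mem fun j _ => ?_
        refine pow_mem (sum_mem fun s _ => ?_) 2
        exact mul_mem (pow_mem (pow_mem (hlam i) n) s) (pow_mem (pow_mem (hlam j) n) _)
    have hdn0 : (d n : ℂ) ≠ 0 := by
      rw [hd n hn]
      refine mul_ne_zero (mul_ne_zero ?_ ?_) ?_
      · exact pow_ne_zero _ (Nat.cast_ne_zero.mpr (by omega))
      · exact pow_ne_zero _ (Int.cast_ne_zero.mpr hX.ne_zero)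
      · rw [Finset.prod_ne_zero_iff]
        intro i _
        rw [Finset.prod_ne_zero_iff]
        intro j hj
        have hij : i < j := Finset.mem_Ioi.mp hj
        refine pow_ne_zero _ (div_ne_zero ?_ ?_)
        · exact sub_ne_zero.mpr (h0 i j hij)
        · exact sub_ne_zero.mpr fun h => hij.ne (hdist h)
    have hdn0' : d n ≠ 0 := fun h => hdn0 (by rw [h]; simp)
    have hdnQ : (d n : ℚ) ≠ 0 := Int.cast_ne_zero.mpr hdn0'
    set q : ℚ := (d (n * k) : ℚ) / (d n : ℚ) with hq
    have hqc : ((q : ℚ) : ℂ) = w := by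
      rw [hq]
      push_cast
      rw [key]
      field_simp
    have hqint : IsIntegral ℤ q := by
      have h1 : IsIntegral ℤ ((IsScalarTower.toAlgHom ℤ ℚ ℂ) q) := by
        show IsIntegral ℤ (algebraMap ℚ ℂ q)
        rw [eq_ratCast (algebraMap ℚ ℂ) q, hqc]
        exact hwint
      exact (isIntegral_algHom_iff (IsScalarTower.toAlgHom ℤ ℚ ℂ)
        (algebraMap ℚ ℂ).injective).mp h1
    obtain ⟨c, hc⟩ := IsIntegrallyClosed.isIntegral_iff.mp hqint
    have hcq : (c : ℚ) = q := by rw [← hc]; simp [eq_intCast]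
    refine ⟨c, ?_⟩
    have hfin : (d (n * k) : ℚ) = (d n : ℚ) * (c : ℚ) := by
      rw [hcq, hq]
      field_simp
    exact_mod_cast hfin
end

section
/- Let X ∈ GL_2(ℤ) be an invertible 2 × 2 integer matrix with distinct complex eigenvalues λ_1 ≠ λ_2, and set a = tr X and b = (tr X)² − 4 det X. Then b ≠ 0, (λ_1 − λ_2)² = b, and for every n ≥ 1 the complex number D_n = (n²/b) · (det X)^{n−1} · (λ_1^n − λ_2^n)² is an integer; moreover, denoting these integers by d_n, n | m implies d_n | d_m. -/
open Polynomial Finset Matrix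

/-!
The eigenvalues `λ₁, λ₂` are the roots of `t² - a t + det X`, so `(λ₁ - λ₂)² = a² - 4 det X = b`,
and `b ≠ 0` because the roots are distinct. With the Lucas sequence `Uₙ` of parameters
`(p, q) = (a, det X)`, which satisfies `(λ₁ - λ₂) Uₙ = λ₁ⁿ - λ₂ⁿ`, the number `Dₙ` equals the integer
`n² (det X)ⁿ⁻¹ Uₙ²`. Divisibility follows factor by factor; for the Lucas factor it comes from
the addition formula `U_{m+n+1} = U_{m+1} U_{n+1} - q Uₘ Uₙ`.
-/

section Lucas

variable {R S : Type*} [CommRing R] [CommRing S]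

def lucasU (p q : R) : ℕ → R
  | 0 => 0
  | 1 => 1
  | n + 2 => p * lucasU p q (n + 1) - q * lucasU p q n

lemma lucasU_add_add_one (p q : R) (m : ℕ) :
    ∀ n, lucasU p q (m + n + 1) =
      lucasU p q (m + 1) * lucasU p q (n + 1) - q * lucasU p q m * lucasU p q n
  | 0 => by simp [lucasU]
  | 1 => by simp only [lucasU]; ring
  | n + 2 => by
    have h₀ := lucasU_add_add_one p q m n
    have h₁ := lucasU_add_add_one p q m (n + 1)
    have e₁ : lucasU p q (m + (n + 2) + 1) =
        p * lucasU p q (m + (n + 1) + 1) - q * lucasU p q (m + n + 1) := rfl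
    have e₂ : lucasU p q (n + 2 + 1) = p * lucasU p q (n + 2) - q * lucasU p q (n + 1) := rfl
    have e₃ : lucasU p q (n + 2) = p * lucasU p q (n + 1) - q * lucasU p q n := rfl
    linear_combination e₁ + p * h₁ - q * h₀ - lucasU p q (m + 1) * e₂ + q * lucasU p q m * e₃

lemma lucasU_dvd_lucasU_mul (p q : R) (n : ℕ) : ∀ k, lucasU p q n ∣ lucasU p q (n * k)
  | 0 => by simp [lucasU]
  | k + 1 => by
    obtain _ | n := n
    · simp
    rw [Nat.mul_succ, ← add_assoc, lucasU_add_add_one]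
    exact dvd_sub (dvd_mul_left _ _)
      ((lucasU_dvd_lucasU_mul p q (n + 1) k).mul_left _ |>.mul_right _)

lemma map_lucasU (f : R →+* S) (p q : R) : ∀ n, f (lucasU p q n) = lucasU (f p) (f q) n
  | 0 => by simp [lucasU]
  | 1 => by simp [lucasU]
  | n + 2 => by simp [lucasU, map_lucasU f p q n, map_lucasU f p q (n + 1)]

lemma sub_mul_lucasU (α β : R) : ∀ n, (α - β) * lucasU (α + β) (α * β) n = α ^ n - β ^ n
  | 0 => by simp [lucasU]
  | 1 => by simp [lucasU]
  | n + 2 => by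
    have h₀ := sub_mul_lucasU α β n
    have h₁ := sub_mul_lucasU α β (n + 1)
    rw [lucasU]
    linear_combination (α + β) * h₁ - α * β * h₀

end Lucas

lemma Matrix.add_eq_trace_and_mul_eq_det_of_charpoly_map_eq {R K : Type*} [CommRing R]
    [Nontrivial R] [CommRing K] (M : Matrix (Fin 2) (Fin 2) R) (f : R →+* K) {α β : K}
    (h : M.charpoly.map f = (X - C α) * (X - C β)) :
    α + β = f M.trace ∧ α * β = f M.det := by
  rw [charpoly_fin_two] at h
  have h₀ : f M.det = α * β := by
    simpa [coeff_X, coeff_C] using congrArg (coeff · 0) h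
  have h₁ : -f M.trace = -α - β := by
    simpa [coeff_X, coeff_C, mul_sub, sub_mul] using congrArg (coeff · 1) h
  exact ⟨by linear_combination h₁, h₀.symm⟩

theorem stmt_12_general (X : Matrix (Fin 2) (Fin 2) ℤ)
    (lam : Fin 2 → ℂ)
    (hchar : X.charpoly.map (Int.castRingHom ℂ) =
      ∏ i : Fin 2, (Polynomial.X - Polynomial.C (lam i)))
    (hdist : lam 0 ≠ lam 1)
    (b : ℤ) (hb : b = (Matrix.trace X) ^ 2 - 4 * X.det) :
    b ≠ 0 ∧ (lam 0 - lam 1) ^ 2 = (b : ℂ) ∧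
      ∃ d : ℕ → ℤ,
        (∀ n : ℕ, 1 ≤ n → (d n : ℂ) =
          (n : ℂ) ^ 2 / (b : ℂ) * (X.det : ℂ) ^ (n - 1) *
            (lam 0 ^ n - lam 1 ^ n) ^ 2) ∧
        ∀ n m : ℕ, 1 ≤ n → 1 ≤ m → n ∣ m → d n ∣ d m := by
  obtain ⟨hs, hp⟩ : lam 0 + lam 1 = (X.trace : ℂ) ∧ lam 0 * lam 1 = (X.det : ℂ) :=
    X.add_eq_trace_and_mul_eq_det_of_charpoly_map_eq _ (by rw [hchar, Fin.prod_univ_two])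
  have hbC : (b : ℂ) = (lam 0 - lam 1) ^ 2 := by
    rw [hb, Int.cast_sub, Int.cast_mul, Int.cast_pow, ← hs, ← hp]
    push_cast
    ring
  have hb₀ : (b : ℂ) ≠ 0 := hbC ▸ pow_ne_zero 2 (sub_ne_zero.mpr hdist)
  have hU (n : ℕ) : (lam 0 - lam 1) * lucasU X.trace X.det n = lam 0 ^ n - lam 1 ^ n := by
    rw [← sub_mul_lucasU, hs, hp, ← eq_intCast (Int.castRingHom ℂ), map_lucasU]
    simp
  refine ⟨by exact_mod_cast hb₀, hbC.symm,
    fun n => n ^ 2 * X.det ^ (n - 1) * lucasU X.trace X.det n ^ 2, fun n _ => ?_, ?_⟩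
  · simp only [Int.cast_mul, Int.cast_pow, Int.cast_natCast]
    rw [← hU, mul_pow, ← hbC]
    field_simp
  · rintro n m - hm ⟨k, rfl⟩
    have hk : 1 ≤ k := Nat.pos_of_mul_pos_left hm
    refine mul_dvd_mul (mul_dvd_mul ?_ (pow_dvd_pow _ ?_)) (pow_dvd_pow_of_dvd ?_ 2)
    · exact pow_dvd_pow_of_dvd (by exact_mod_cast dvd_mul_right n k) 2
    · exact Nat.sub_le_sub_right (Nat.le_mul_of_pos_right n hk) 1
    · exact lucasU_dvd_lucasU_mul _ _ n k

/-- For `X ∈ GL_2(ℤ)` with distinct eigenvalues `λ_1 ≠ λ_2`,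
setting `a = tr X` and `b = (tr X)² − 4 det X`, one has `b ≠ 0`,
`(λ_1 − λ_2)² = b`, every `D_n = (n²/b)(det X)^{n-1}(λ_1^n − λ_2^n)²` is an
integer `d_n`, and `n ∣ m → d_n ∣ d_m`. -/
theorem stmt_12 (X : Matrix (Fin 2) (Fin 2) ℤ) (hX : IsUnit X.det)
    (lam : Fin 2 → ℂ)
    (hchar : X.charpoly.map (Int.castRingHom ℂ) =
      ∏ i : Fin 2, (Polynomial.X - Polynomial.C (lam i)))
    (hdist : lam 0 ≠ lam 1)
    (a b : ℤ) (ha : a = Matrix.trace X) (hb : b = (Matrix.trace X) ^ 2 - 4 * X.det) :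
    b ≠ 0 ∧ (lam 0 - lam 1) ^ 2 = (b : ℂ) ∧
      ∃ d : ℕ → ℤ,
        (∀ n : ℕ, 1 ≤ n → (d n : ℂ) =
          (n : ℂ) ^ 2 / (b : ℂ) * (X.det : ℂ) ^ (n - 1) *
            (lam 0 ^ n - lam 1 ^ n) ^ 2) ∧
        ∀ n m : ℕ, 1 ≤ n → 1 ≤ m → n ∣ m → d n ∣ d m :=
  stmt_12_general X lam hchar hdist b hb
end

section
/- Let r ≥ 1, n ≥ 1 and let X ∈ M_r(ℂ) be invertible with pairwise distinct eigenvalues λ_1, …, λ_r (so the characteristic polynomial of X factors over ℂ as ∏_{i=1}^r (t − λ_i)). Then the determinant of the linear endomorphism of M_r(ℂ) given by H ↦ ∑_{k=0}^{n−1} X^k · H · X^{n−1−k} equals n^r · (det X)^{n−1} · ∏_{1 ≤ i < j ≤ r} ((λ_i^n − λ_j^n)/(λ_i − λ_j))². -/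
/-!
Distinct eigenvalues give a basis of eigenvectors of `X`, and changing to that basis is an algebra
automorphism of `M_r(ℂ)` carrying `X` to `D = diag(λ)`. Algebra automorphisms conjugate the map
`H ↦ ∑ X^k H X^(n-1-k)` into the same map for `D`, so both have the same determinant. For `D` the
matrix units `E_ij` are eigenvectors, with eigenvalues `∑_k λ_i^k λ_j^(n-1-k)`: for `i = j` this is
`n λ_i^(n-1)`, and for `i ≠ j` it is `(λ_i^n - λ_j^n)/(λ_i - λ_j)`, symmetric in `i` and `j`.
-/

open Polynomial Finset

open scoped Matrix

section eigenbasis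

variable {R M ι : Type*} [CommRing R] [AddCommGroup M] [Module R M] [Fintype ι] [DecidableEq ι]

theorem LinearMap.toMatrix_eq_diagonal_of_apply_basis (b : Module.Basis ι R M) {f : M →ₗ[R] M}
    {μ : ι → R} (hf : ∀ i, f (b i) = μ i • b i) :
    LinearMap.toMatrix b b f = Matrix.diagonal μ := by
  ext i j
  rw [LinearMap.toMatrix_apply, hf, map_smul, b.repr_self, Matrix.diagonal_apply]
  by_cases h : i = j <;> simp [h]

theorem LinearMap.det_eq_prod_of_apply_basis (b : Module.Basis ι R M) {f : M →ₗ[R] M}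
    {μ : ι → R} (hf : ∀ i, f (b i) = μ i • b i) :
    LinearMap.det f = ∏ i, μ i := by
  rw [← LinearMap.det_toMatrix b, LinearMap.toMatrix_eq_diagonal_of_apply_basis b hf,
    Matrix.det_diagonal]

end eigenbasis

theorem Matrix.exists_basis_mulVec_eq_smul {K ι : Type*} [Field K] [Fintype ι] [DecidableEq ι]
    (X : Matrix ι ι K) {lam : ι → K} (hroot : ∀ i, X.charpoly.IsRoot (lam i))
    (hlam : Function.Injective lam) :
    ∃ b : Module.Basis ι K (ι → K), ∀ i, X *ᵥ b i = lam i • b i := by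
  have hev (i : ι) : Module.End.HasEigenvalue (Matrix.toLin' X) (lam i) := by
    rw [Module.End.hasEigenvalue_iff_isRoot_charpoly, Matrix.charpoly_toLin']
    exact hroot i
  choose v hv using fun i => (hev i).exists_hasEigenvector
  have hli := Module.End.eigenvectors_linearIndependent' _ lam hlam v hv
  have hcard : Fintype.card ι = Module.finrank K (ι → K) := by simp
  refine ⟨basisOfLinearIndependentOfCardEqFinrank' v hli hcard, fun i => ?_⟩
  rw [coe_basisOfLinearIndependentOfCardEqFinrank', ← Matrix.toLin'_apply]
  exact (hv i).apply_eq_smul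

section powDeriv

variable (R : Type*) {A B : Type*} [CommRing R] [Ring A] [Algebra R A] [Ring B] [Algebra R B]

def powDeriv (x : A) (n : ℕ) : A →ₗ[R] A :=
  ∑ k ∈ range n, LinearMap.mulLeft R (x ^ k) ∘ₗ LinearMap.mulRight R (x ^ (n - 1 - k))

variable {R}

theorem powDeriv_apply (x : A) (n : ℕ) (h : A) :
    powDeriv R x n h = ∑ k ∈ range n, x ^ k * h * x ^ (n - 1 - k) := by
  simp [powDeriv, LinearMap.sum_apply, mul_assoc]

theorem powDeriv_map (σ : A ≃ₐ[R] B) (x : A) (n : ℕ) :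
    powDeriv R (σ x) n =
      (σ.toLinearEquiv : A →ₗ[R] B) ∘ₗ powDeriv R x n ∘ₗ (σ.toLinearEquiv.symm : B →ₗ[R] A) := by
  ext h
  simp [powDeriv_apply, ← map_pow]

theorem det_powDeriv_map (σ : A ≃ₐ[R] B) (x : A) (n : ℕ) :
    LinearMap.det (powDeriv R (σ x) n) = LinearMap.det (powDeriv R x n) := by
  rw [powDeriv_map, LinearMap.det_conj]

theorem powDeriv_diagonal_single {m : Type*} [Fintype m] [DecidableEq m] (d : m → R) (n : ℕ)
    (i j : m) :
    powDeriv R (Matrix.diagonal d) n (Matrix.single i j 1) =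
      (∑ k ∈ range n, d i ^ k * d j ^ (n - 1 - k)) • Matrix.single i j 1 := by
  rw [powDeriv_apply, Finset.sum_smul]
  refine Finset.sum_congr rfl fun k _ => ?_
  ext a b
  simp only [Matrix.diagonal_pow, Matrix.diagonal_mul, Matrix.mul_diagonal, Matrix.smul_apply,
    Matrix.single_apply, smul_eq_mul, Pi.pow_apply]
  split_ifs with h
  · obtain ⟨rfl, rfl⟩ := h
    ring
  · simp

theorem det_powDeriv_diagonal {m : Type*} [Fintype m] [DecidableEq m] (d : m → R) (n : ℕ) :
    LinearMap.det (powDeriv R (Matrix.diagonal d) n) =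
      ∏ i, ∏ j, ∑ k ∈ range n, d i ^ k * d j ^ (n - 1 - k) := by
  rw [LinearMap.det_eq_prod_of_apply_basis (Matrix.stdBasis R m m)
    (μ := fun p => ∑ k ∈ range n, d p.1 ^ k * d p.2 ^ (n - 1 - k)), Fintype.prod_prod_type]
  rintro ⟨i, j⟩
  rw [Matrix.stdBasis_eq_single, powDeriv_diagonal_single]

end powDeriv

theorem prod_prod_geom_sum₂_of_injective {K ι : Type*} [Field K] [Fintype ι] [LinearOrder ι]
    [LocallyFiniteOrderTop ι] [LocallyFiniteOrderBot ι] {lam : ι → K}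
    (hlam : Function.Injective lam) (n : ℕ) :
    ∏ i, ∏ j, ∑ k ∈ range n, lam i ^ k * lam j ^ (n - 1 - k) =
      (n : K) ^ Fintype.card ι * (∏ i, lam i) ^ (n - 1) *
        ∏ i, ∏ j ∈ Ioi i, ((lam i ^ n - lam j ^ n) / (lam i - lam j)) ^ 2 := by
  set g : ι → ι → K := fun i j => ∑ k ∈ range n, lam i ^ k * lam j ^ (n - 1 - k)
  have hdiag : ∏ i, g i i = (n : K) ^ Fintype.card ι * (∏ i, lam i) ^ (n - 1) := by
    simp only [g, geom_sum₂_self, prod_mul_distrib, prod_const, prod_pow, card_univ]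
  have hoff {i j : ι} (hij : i < j) :
      g i j * g j i = ((lam i ^ n - lam j ^ n) / (lam i - lam j)) ^ 2 := by
    have hne : lam i - lam j ≠ 0 := sub_ne_zero.2 (hlam.ne hij.ne)
    rw [show g j i = g i j from geom_sum₂_comm _ _ _, ← sq]
    exact congrArg (· ^ 2) (eq_div_of_mul_eq hne (geom_sum₂_mul _ _ _))
  calc ∏ i, ∏ j, g i j = ∏ i, (g i i * ∏ j ∈ {i}ᶜ, g i j) :=
        prod_congr rfl fun i _ => Fintype.prod_eq_mul_prod_compl i _
    _ = (∏ i, g i i) * ∏ i, ∏ j ∈ Ioi i, g i j * g j i := by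
        rw [prod_mul_distrib, prod_prod_Ioi_mul_eq_prod_prod_off_diag (fun i j => g j i)]
    _ = _ := by
        rw [hdiag]
        congr 1
        exact prod_congr rfl fun i _ => prod_congr rfl fun j hj => hoff (mem_Ioi.1 hj)

theorem stmt_13_general (r : ℕ) (n : ℕ)
    (X : Matrix (Fin r) (Fin r) ℂ) (lam : Fin r → ℂ)
    (hchar : X.charpoly = ∏ i : Fin r, (Polynomial.X - Polynomial.C (lam i)))
    (hdist : Function.Injective lam)
    (f : Matrix (Fin r) (Fin r) ℂ →ₗ[ℂ] Matrix (Fin r) (Fin r) ℂ)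
    (hf : ∀ H : Matrix (Fin r) (Fin r) ℂ,
      f H = ∑ k ∈ Finset.range n, X ^ k * H * X ^ (n - 1 - k)) :
    LinearMap.det f =
      (n : ℂ) ^ r * X.det ^ (n - 1) *
        ∏ i : Fin r, ∏ j ∈ Finset.Ioi i,
          ((lam i ^ n - lam j ^ n) / (lam i - lam j)) ^ 2 := by
  have hroot (i : Fin r) : X.charpoly.IsRoot (lam i) := by
    rw [hchar, IsRoot, eval_prod]
    exact prod_eq_zero (mem_univ i) (by simp)
  obtain ⟨b, hb⟩ := X.exists_basis_mulVec_eq_smul hroot hdist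
  have hdiag : LinearMap.toMatrix b b (Matrix.toLin' X) = Matrix.diagonal lam :=
    LinearMap.toMatrix_eq_diagonal_of_apply_basis b fun i => hb i
  have hdet : X.det = ∏ i, lam i := by
    rw [← LinearMap.det_toLin', ← LinearMap.det_toMatrix b, hdiag, Matrix.det_diagonal]
  have hfX : f = powDeriv ℂ X n := LinearMap.ext fun H => (hf H).trans (powDeriv_apply X n H).symm
  set σ := Matrix.toLinAlgEquiv'.trans (LinearMap.toMatrixAlgEquiv b)
  have hσ : σ X = Matrix.diagonal lam := hdiag
  rw [hfX, ← det_powDeriv_map σ, hσ, det_powDeriv_diagonal,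
    prod_prod_geom_sum₂_of_injective hdist, Fintype.card_fin, hdet]

/-- For invertible `X ∈ M_r(ℂ)` with pairwise distinct
eigenvalues `λ_1, …, λ_r`, the determinant of the endomorphism
`H ↦ ∑_{k<n} X^k H X^{n-1-k}` of `M_r(ℂ)` equals
`n^r (det X)^{n-1} ∏_{i<j} ((λ_i^n − λ_j^n)/(λ_i − λ_j))²`. -/
theorem stmt_13 (r : ℕ) (hr : 1 ≤ r) (n : ℕ) (hn : 1 ≤ n)
    (X : Matrix (Fin r) (Fin r) ℂ) (hX : IsUnit X.det) (lam : Fin r → ℂ)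
    (hchar : X.charpoly = ∏ i : Fin r, (Polynomial.X - Polynomial.C (lam i)))
    (hdist : Function.Injective lam)
    (f : Matrix (Fin r) (Fin r) ℂ →ₗ[ℂ] Matrix (Fin r) (Fin r) ℂ)
    (hf : ∀ H : Matrix (Fin r) (Fin r) ℂ,
      f H = ∑ k ∈ Finset.range n, X ^ k * H * X ^ (n - 1 - k)) :
    LinearMap.det f =
      (n : ℂ) ^ r * X.det ^ (n - 1) *
        ∏ i : Fin r, ∏ j ∈ Finset.Ioi i,
          ((lam i ^ n - lam j ^ n) / (lam i - lam j)) ^ 2 :=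
  stmt_13_general r n X lam hchar hdist f hf
end

section
/- Let S be a commutative ring, r ≥ 1, and X ∈ M_r(S). For n ≥ 1 write J_n(X) = ∑_{k=0}^{n−1} (Xᵀ)^k ⊗ X^{n−1−k}, where ⊗ denotes the Kronecker product. Then {J_n(X)}_{n ≥ 1} is a matrix divisibility sequence: for all n, m ≥ 1 with n | m, there exists a matrix Q ∈ M_{r²}(S) such that J_m(X) = Q · J_n(X). Consequently, det J_n(X) divides det J_m(X) in S whenever n | m. -/
open Finset Matrix Kronecker

/-- Geometric-type divisibility: if `A` and `B` commute, then
`∑_{k<nt} A^k B^{nt-1-k}` is a left multiple of `∑_{k<n} A^k B^{n-1-k}`. -/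
lemma geom_div {R : Type*} [Ring R] (A B : R) (h : Commute A B) (n t : ℕ) :
    ∃ Q : R, (∑ k ∈ Finset.range (n * t), A ^ k * B ^ (n * t - 1 - k)) =
      Q * ∑ k ∈ Finset.range n, A ^ k * B ^ (n - 1 - k) := by
  induction t with
  | zero => exact ⟨0, by simp⟩
  | succ t ih =>
    obtain ⟨Q', hQ'⟩ := ih
    refine ⟨B ^ n * Q' + A ^ (n * t), ?_⟩
    have hsplit : n * (t + 1) = n * t + n := by ring
    rw [hsplit, Finset.sum_range_add]
    have h1 : (∑ k ∈ Finset.range (n * t), A ^ k * B ^ (n * t + n - 1 - k)) =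
        B ^ n * ∑ k ∈ Finset.range (n * t), A ^ k * B ^ (n * t - 1 - k) := by
      rw [Finset.mul_sum]
      refine Finset.sum_congr rfl fun k hk => ?_
      have hk' : k < n * t := Finset.mem_range.mp hk
      have he : n * t + n - 1 - k = n + (n * t - 1 - k) := by
        set p := n * t with hp
        omega
      rw [he, pow_add, ← mul_assoc, ← mul_assoc,
        ((h.symm.pow_pow n k)).eq]
    have h2 : (∑ i ∈ Finset.range n, A ^ (n * t + i) * B ^ (n * t + n - 1 - (n * t + i))) =
        A ^ (n * t) * ∑ i ∈ Finset.range n, A ^ i * B ^ (n - 1 - i) := by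
      rw [Finset.mul_sum]
      refine Finset.sum_congr rfl fun i hi => ?_
      have he : n * t + n - 1 - (n * t + i) = n - 1 - i := by
        set p := n * t with hp
        omega
      rw [he, pow_add, mul_assoc]
    rw [h1, h2, hQ', add_mul, mul_assoc]

lemma kron_one_pow {S : Type*} [CommRing S] {r : ℕ} (M : Matrix (Fin r) (Fin r) S) (a : ℕ) :
    (M ⊗ₖ (1 : Matrix (Fin r) (Fin r) S)) ^ a = (M ^ a) ⊗ₖ 1 := by
  induction a with
  | zero => simp [Matrix.one_kronecker_one]
  | succ a ih => rw [pow_succ, ih, ← Matrix.mul_kronecker_mul, ← pow_succ, one_mul]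

lemma one_kron_pow {S : Type*} [CommRing S] {r : ℕ} (M : Matrix (Fin r) (Fin r) S) (a : ℕ) :
    ((1 : Matrix (Fin r) (Fin r) S) ⊗ₖ M) ^ a = (1 : Matrix (Fin r) (Fin r) S) ⊗ₖ (M ^ a) := by
  induction a with
  | zero => simp [Matrix.one_kronecker_one]
  | succ a ih => rw [pow_succ, ih, ← Matrix.mul_kronecker_mul, ← pow_succ, one_mul]

/-- For `X ∈ M_r(S)` over a commutative ring `S`, the matrices
`J_n(X) = ∑_{k<n} (Xᵀ)^k ⊗ X^{n-1-k}` form a matrix divisibility sequence, and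
consequently `det J_n(X) ∣ det J_m(X)` whenever `n ∣ m`. -/
theorem stmt_15 (S : Type*) [CommRing S] (r : ℕ) (hr : 1 ≤ r)
    (X : Matrix (Fin r) (Fin r) S) :
    ∀ n m : ℕ, 1 ≤ n → 1 ≤ m → n ∣ m →
      (∃ Q : Matrix (Fin r × Fin r) (Fin r × Fin r) S,
        (∑ k ∈ Finset.range m, ((Xᵀ) ^ k) ⊗ₖ (X ^ (m - 1 - k))) =
          Q * ∑ k ∈ Finset.range n, ((Xᵀ) ^ k) ⊗ₖ (X ^ (n - 1 - k))) ∧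
      Matrix.det (∑ k ∈ Finset.range n, ((Xᵀ) ^ k) ⊗ₖ (X ^ (n - 1 - k))) ∣
        Matrix.det (∑ k ∈ Finset.range m, ((Xᵀ) ^ k) ⊗ₖ (X ^ (m - 1 - k))) := by
  intro n m hn hm hdvd
  set A : Matrix (Fin r × Fin r) (Fin r × Fin r) S := (Xᵀ) ⊗ₖ 1 with hA
  set B : Matrix (Fin r × Fin r) (Fin r × Fin r) S := (1 : Matrix (Fin r) (Fin r) S) ⊗ₖ X with hB
  have hcomm : Commute A B := by
    show A * B = B * A
    rw [hA, hB, ← Matrix.mul_kronecker_mul, ← Matrix.mul_kronecker_mul]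
    simp
  have hpow : ∀ a b : ℕ, ((Xᵀ) ^ a) ⊗ₖ (X ^ b) = A ^ a * B ^ b := by
    intro a b
    rw [hA, hB, kron_one_pow, one_kron_pow, ← Matrix.mul_kronecker_mul, mul_one, one_mul]
  have key : ∃ Q : Matrix (Fin r × Fin r) (Fin r × Fin r) S,
      (∑ k ∈ Finset.range m, ((Xᵀ) ^ k) ⊗ₖ (X ^ (m - 1 - k))) =
        Q * ∑ k ∈ Finset.range n, ((Xᵀ) ^ k) ⊗ₖ (X ^ (n - 1 - k)) := by
    obtain ⟨t, rfl⟩ := hdvd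
    obtain ⟨Q, hQ⟩ := geom_div A B hcomm n t
    refine ⟨Q, ?_⟩
    simp only [hpow]
    exact hQ
  refine ⟨key, ?_⟩
  obtain ⟨Q, hQ⟩ := key
  exact ⟨Q.det, by rw [hQ, Matrix.det_mul, mul_comm]⟩
end
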